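/- arXiv:1511.03164 — 2 statements merged into one kernel-verified Lean document; each statement's English description precedes it below -/
import Mathlib

section
/- Let W_n = A_n/⟨t^{n-1}Σ_{g∈G} g⟩ be the cokernel of the A_n-linear map k → A_n sending 1 to t^{n-1}·Σ_{g∈G} g, and let C be the cokernel of the A_n-linear map R_n → A_n sending 1 to Σ_{g∈G} g. Then there is a short exact sequence of A_n-modules 0 → R_{n-1} → W_n → C → 0, where R_{n-1} carries the trivial G-action, and this sequence splits after restriction of scalars along the inclusion R_n → A_n. -/
open scoped TensorProduct DirectSum

noncomputable section

variable (S : Type) [CommRing S] [IsDomain S] [IsDiscreteValuationRing S]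
variable (t : S)
variable (G : Type) [Group G] [Fintype G]

/-- `Rq n` is the quotient ring `R_n = S/(t^n)`. -/
abbrev Rq (n : ℕ) : Type := S ⧸ Ideal.span {t ^ n}

/-- `Aq n` is the group algebra `A_n = R_n G`. -/
abbrev Aq (n : ℕ) : Type := MonoidAlgebra (Rq S t n) G

/-- The canonical surjection `R_n → R_i` for `i ≤ n`. -/
def Rmap (i n : ℕ) (h : i ≤ n) : Rq S t n →+* Rq S t i :=
  Ideal.Quotient.factor (Ideal.span_singleton_le_span_singleton.mpr (pow_dvd_pow t h))

/-- The canonical surjection `A_n → A_i` for `i ≤ n`, induced by `R_n → R_i`. -/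
def Amap (i n : ℕ) (h : i ≤ n) : Aq S t G n →+* Aq S t G i :=
  letI : Algebra (Rq S t n) (Aq S t G i) :=
    RingHom.toAlgebra' ((algebraMap (Rq S t i) (Aq S t G i)).comp (Rmap S t i n h))
      (fun r x => Algebra.commutes (Rmap S t i n h r) x)
  ((MonoidAlgebra.lift (Rq S t n) (Aq S t G i) G) (MonoidAlgebra.of (Rq S t i) G)).toRingHom

/-- The augmentation map `A_n → R_n`, `Σ r_g g ↦ Σ r_g`. -/
def aug (n : ℕ) : Aq S t G n →+* Rq S t n :=
  ((MonoidAlgebra.lift (Rq S t n) (Rq S t n) G) 1).toRingHom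

/-- The image of `t` in `R_n`. -/
def tbar (n : ℕ) : Rq S t n := Ideal.Quotient.mk _ t

/-- The norm element `Σ_{g ∈ G} g` of `A_n`. -/
def sigmaEl (n : ℕ) : Aq S t G n := ∑ g : G, MonoidAlgebra.of (Rq S t n) G g

/-- The element `t^{i-1} Σ_{g ∈ G} g` of `A_i`. -/
def wEl (i : ℕ) : Aq S t G i :=
  algebraMap (Rq S t i) (Aq S t G i) (tbar S t i ^ (i - 1)) * sigmaEl S t G i

/-- `W_i = A_i/⟨t^{i-1} Σ_{g∈G} g⟩`. -/
abbrev Wmod (i : ℕ) : Type :=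
  Aq S t G i ⧸ Submodule.span (Aq S t G i) {wEl S t G i}

/-- The submodule `t^m X` of an `A_n`-module `X`. -/
def tSub (n m : ℕ) (X : Type) [AddCommGroup X] [Module (Aq S t G n) X] :
    Submodule (Aq S t G n) X :=
  Submodule.span (Aq S t G n)
    (Set.range fun x : X => algebraMap (Rq S t n) (Aq S t G n) (tbar S t n ^ m) • x)

/-!
In `A = R[G]` the norm element `N = Σ g` absorbs the group: `a * N = ε(a) • N` for the
augmentation `ε`, and `r ↦ r • N` is injective (read off the coefficient of `1`). Hence the
submodule `A • cN` consists of the `r • N` with `r ∈ (c)`, and `a * N ∈ A • t^{n-1}N` iff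
`ε(a)` vanishes in `R_{n-1}`. So `a ↦ a * N` induces an embedding `R_{n-1} → W_n` with image
`A N / A t^{n-1}N`, the kernel of `W_n → A/AN`, and the coefficient of `1` reduced mod
`t^{n-1}` is an `R_n`-linear retraction of it.
-/

section NormElement

variable {R : Type*} [CommRing R] {G : Type*} [Group G] [Fintype G]

namespace MonoidAlgebra

theorem of_mul_sum_of (g : G) : of R G g * ∑ h, of R G h = ∑ h, of R G h := by
  rw [Finset.mul_sum]
  exact Fintype.sum_equiv (Equiv.mulLeft g) _ _ fun h => (map_mul _ _ _).symm

theorem mul_sum_of (a : MonoidAlgebra R G) :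
    a * ∑ h, of R G h = lift R R G 1 a • ∑ h, of R G h := by
  induction a using MonoidAlgebra.induction_on with
  | of g => rw [of_mul_sum_of, lift_of, MonoidHom.one_apply, one_smul]
  | add x y hx hy => rw [add_mul, hx, hy, map_add, add_smul]
  | smul r x hx => rw [smul_mul_assoc, hx, map_smul, smul_smul, smul_eq_mul]

theorem coeff_smul_sum_of (r : R) (g : G) : (r • ∑ h, of R G h).coeff g = r := by
  simp [coeff_sum, coeff_single]

theorem smul_sum_of_injective : Function.Injective fun r : R => r • ∑ h, of R G h :=
  fun r s h => by
    rw [← coeff_smul_sum_of r (1 : G), ← coeff_smul_sum_of s (1 : G)]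
    exact congrArg (·.coeff 1) h

theorem mem_span_smul_sum_of_iff {x : MonoidAlgebra R G} {c : R} :
    x ∈ Submodule.span (MonoidAlgebra R G) {c • ∑ h, of R G h} ↔
      ∃ r ∈ Ideal.span {c}, r • ∑ h, of R G h = x := by
  rw [Submodule.mem_span_singleton]
  constructor
  · rintro ⟨b, rfl⟩
    refine ⟨c * lift R R G 1 b, Ideal.mul_mem_right _ _ (Ideal.mem_span_singleton_self c), ?_⟩
    rw [smul_eq_mul, mul_smul_comm, mul_sum_of, smul_smul]
  · rintro ⟨r, hr, rfl⟩
    obtain ⟨s, rfl⟩ := Ideal.mem_span_singleton'.mp hr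
    refine ⟨algebraMap R _ s, ?_⟩
    rw [smul_eq_mul, mul_smul_comm, mul_sum_of, smul_smul, mul_comm, AlgHom.commutes,
      Algebra.algebraMap_self, RingHom.id_apply]

theorem mul_sum_of_mem_span_iff {a : MonoidAlgebra R G} {c : R} :
    a * ∑ h, of R G h ∈ Submodule.span (MonoidAlgebra R G) {c • ∑ h, of R G h} ↔
      lift R R G 1 a ∈ Ideal.span {c} := by
  rw [mem_span_smul_sum_of_iff, mul_sum_of]
  exact ⟨fun ⟨r, hr, h⟩ => smul_sum_of_injective (G := G) h ▸ hr,
    fun h => ⟨_, h, rfl⟩⟩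

theorem coeff_mem_of_mem_span_smul_sum_of {x : MonoidAlgebra R G} {c : R}
    (hx : x ∈ Submodule.span (MonoidAlgebra R G) {c • ∑ h, of R G h}) (g : G) :
    x.coeff g ∈ Ideal.span {c} := by
  obtain ⟨r, hr, rfl⟩ := mem_span_smul_sum_of_iff.mp hx
  rwa [coeff_smul_sum_of]

end MonoidAlgebra

end NormElement

section Reduction

variable (S : Type) [CommRing S] (t : S)

theorem Rmap_surjective (i n : ℕ) (h : i ≤ n) : Function.Surjective (Rmap S t i n h) :=
  Ideal.Quotient.factor_surjective _

theorem ker_Rmap (i n : ℕ) (h : i ≤ n) :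
    RingHom.ker (Rmap S t i n h) = Ideal.span {tbar S t n ^ i} := by
  rw [Rmap, Ideal.Quotient.factor_ker, Ideal.map_span, Set.image_singleton, map_pow]
  rfl

variable (G : Type) [Group G] (n : ℕ)

abbrev trivialModule : Module (Aq S t G n) (Rq S t (n - 1)) :=
  Module.compHom _ ((Rmap S t (n - 1) n (Nat.sub_le n 1)).comp (aug S t G n))

abbrev reductionModule : Module (Rq S t n) (Rq S t (n - 1)) :=
  Module.compHom _ (Rmap S t (n - 1) n (Nat.sub_le n 1))

attribute [local instance] trivialModule reductionModule

def augReduction : Aq S t G n →ₗ[Aq S t G n] Rq S t (n - 1) :=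
  LinearMap.toSpanSingleton _ _ 1

theorem augReduction_apply (a : Aq S t G n) :
    augReduction S t G n a = Rmap S t (n - 1) n (Nat.sub_le n 1) (aug S t G n a) :=
  mul_one _

theorem augReduction_surjective : Function.Surjective (augReduction S t G n) := by
  intro x
  obtain ⟨r, rfl⟩ := Rmap_surjective S t (n - 1) n (Nat.sub_le n 1) x
  exact ⟨algebraMap _ _ r, by rw [augReduction_apply, aug, AlgHom.toRingHom_eq_coe,
    RingHom.coe_coe, AlgHom.commutes, Algebra.algebraMap_self, RingHom.id_apply]⟩

def coeffOneReduction : Aq S t G n →ₗ[Rq S t n] Rq S t (n - 1) :=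
  LinearMap.toSpanSingleton _ _ 1 ∘ₗ Finsupp.lapply 1 ∘ₗ
    (MonoidAlgebra.coeffLinearEquiv (Rq S t n)).toLinearMap

theorem coeffOneReduction_apply (x : Aq S t G n) :
    coeffOneReduction S t G n x = Rmap S t (n - 1) n (Nat.sub_le n 1) (x.coeff 1) :=
  mul_one _

variable [Fintype G]

theorem wEl_eq_smul : wEl S t G n = tbar S t n ^ (n - 1) • sigmaEl S t G n :=
  (Algebra.smul_def _ _).symm

def normMul : Aq S t G n →ₗ[Aq S t G n] Wmod S t G n :=
  LinearMap.toSpanSingleton _ _ (Submodule.Quotient.mk (sigmaEl S t G n))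

theorem ker_normMul : LinearMap.ker (normMul S t G n) = LinearMap.ker (augReduction S t G n) := by
  ext a
  rw [LinearMap.mem_ker, LinearMap.mem_ker, augReduction_apply, ← RingHom.mem_ker, ker_Rmap,
    normMul, LinearMap.toSpanSingleton_apply, ← Submodule.Quotient.mk_smul,
    Submodule.Quotient.mk_eq_zero, wEl_eq_smul, smul_eq_mul]
  exact MonoidAlgebra.mul_sum_of_mem_span_iff

def normInclusion : Rq S t (n - 1) →ₗ[Aq S t G n] Wmod S t G n :=
  (LinearMap.ker (augReduction S t G n)).liftQ (normMul S t G n) (ker_normMul S t G n).ge ∘ₗ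
    ((augReduction S t G n).quotKerEquivOfSurjective (augReduction_surjective S t G n)).symm

theorem normInclusion_augReduction (a : Aq S t G n) :
    normInclusion S t G n (augReduction S t G n a) = normMul S t G n a := by
  rw [normInclusion, LinearMap.comp_apply, LinearEquiv.coe_coe,
    LinearMap.quotKerEquivOfSurjective_symm_apply, Submodule.liftQ_apply]

theorem normInclusion_injective : Function.Injective (normInclusion S t G n) := by
  rw [normInclusion, LinearMap.coe_comp]
  exact (LinearMap.ker_eq_bot.mp (Submodule.ker_liftQ_eq_bot _ _ _ (ker_normMul S t G n).le)).comp
    (LinearEquiv.injective _)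

theorem range_normInclusion : LinearMap.range (normInclusion S t G n) =
    Submodule.span _ {Submodule.Quotient.mk (sigmaEl S t G n)} := by
  rw [normInclusion, LinearMap.range_comp_of_range_eq_top _ (LinearEquiv.range _),
    Submodule.range_liftQ, normMul, LinearMap.range_toSpanSingleton]

theorem span_wEl_le_span_sigmaEl :
    Submodule.span (Aq S t G n) {wEl S t G n} ≤ Submodule.span (Aq S t G n) {sigmaEl S t G n} :=
  (Submodule.span_singleton_le_iff_mem _ _).mpr
    (Submodule.mem_span_singleton.mpr ⟨algebraMap _ _ (tbar S t n ^ (n - 1)), rfl⟩)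

theorem ker_factor_span_wEl : LinearMap.ker (Submodule.factor (span_wEl_le_span_sigmaEl S t G n)) =
    Submodule.span _ {Submodule.Quotient.mk (sigmaEl S t G n)} := by
  rw [Submodule.ker_mapQ, Submodule.comap_id, Submodule.map_span, Set.image_singleton]
  rfl

theorem span_wEl_le_ker_coeffOneReduction :
    (Submodule.span (Aq S t G n) {wEl S t G n}).restrictScalars (Rq S t n) ≤
      LinearMap.ker (coeffOneReduction S t G n) := by
  intro x hx
  rw [Submodule.restrictScalars_mem, wEl_eq_smul] at hx
  rw [LinearMap.mem_ker, coeffOneReduction_apply, ← RingHom.mem_ker,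
    ker_Rmap S t (n - 1) n (Nat.sub_le n 1)]
  exact MonoidAlgebra.coeff_mem_of_mem_span_smul_sum_of hx 1

def wmodRetraction : Wmod S t G n →ₗ[Rq S t n] Rq S t (n - 1) :=
  Submodule.liftQ _ (coeffOneReduction S t G n) (span_wEl_le_ker_coeffOneReduction S t G n) ∘ₗ
    (Submodule.Quotient.restrictScalarsEquiv (Rq S t n) _).symm.toLinearMap

theorem wmodRetraction_mk (x : Aq S t G n) :
    wmodRetraction S t G n (Submodule.Quotient.mk x) = coeffOneReduction S t G n x :=
  rfl

theorem wmodRetraction_normInclusion (x : Rq S t (n - 1)) :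
    wmodRetraction S t G n (normInclusion S t G n x) = x := by
  obtain ⟨a, rfl⟩ := augReduction_surjective S t G n x
  rw [normInclusion_augReduction, normMul, LinearMap.toSpanSingleton_apply,
    ← Submodule.Quotient.mk_smul, wmodRetraction_mk, coeffOneReduction_apply, smul_eq_mul,
    sigmaEl, MonoidAlgebra.mul_sum_of, MonoidAlgebra.coeff_smul_sum_of, augReduction_apply]
  rfl

end Reduction

theorem statement3 (n : ℕ) :
    letI : Module (Aq S t G n) (Rq S t (n - 1)) :=
      Module.compHom _ ((Rmap S t (n - 1) n (Nat.sub_le n 1)).comp (aug S t G n))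
    letI : Module (Rq S t n) (Rq S t (n - 1)) :=
      Module.compHom _ (Rmap S t (n - 1) n (Nat.sub_le n 1))
    ∃ (f : Rq S t (n - 1) →ₗ[Aq S t G n] Wmod S t G n)
      (g : Wmod S t G n →ₗ[Aq S t G n]
        (Aq S t G n ⧸ Submodule.span (Aq S t G n) {sigmaEl S t G n})),
      Function.Injective f ∧ Function.Surjective g ∧
        LinearMap.range f = LinearMap.ker g ∧
        ∃ r : Wmod S t G n →ₗ[Rq S t n] Rq S t (n - 1), ∀ x, r (f x) = x :=
  ⟨normInclusion S t G n, Submodule.factor (span_wEl_le_span_sigmaEl S t G n),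
    normInclusion_injective S t G n, Submodule.factor_surjective _,
    (range_normInclusion S t G n).trans (ker_factor_span_wEl S t G n).symm,
    wmodRetraction S t G n, wmodRetraction_normInclusion S t G n⟩

end
end

section
/- Let ε: A_n → R_n be the augmentation map Σ_{g∈G} r_g g ↦ Σ_{g∈G} r_g, and let M ⊆ A_n be the kernel of the composite of ε with the canonical surjection R_n → k, so that M = {Σ r_g g : Σ r_g ∈ tR_n}. Then the assignment Σ r_g g ↦ (s mod t^{n-1}), where s ∈ R_n is any element with Σ r_g = t·s, is a well-defined surjective A_n-linear map φ: M → R_{n-1} (with R_{n-1} carrying the trivial G-action); its kernel equals the augmentation ideal ker ε, and the resulting short exact sequence of A_n-modules 0 → ker ε → M → R_{n-1} → 0 splits after restriction of scalars to R_n. -/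
open scoped TensorProduct DirectSum

noncomputable section

variable (S : Type) [CommRing S] [IsDomain S] [IsDiscreteValuationRing S]
variable (t : S)
variable (G : Type) [Group G] [Fintype G]

/-!
Multiplication by `t` induces a map `R_{n-1} → R_n` with image `tR_n`, injective because `t` can be
cancelled in the domain `S`. So `φ` is `ε` on `M = ε⁻¹(tR_n)` followed by the inverse of this map;
it is `A_n`-linear because `ε` is multiplicative, its kernel is `ker ε` by injectivity, and
`y ↦ (t y) · 1_G` is an `R_n`-linear section of it.
-/

section

variable (S : Type) [CommRing S] (t : S) (G : Type) [Group G]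

def mulT (n : ℕ) : Rq S t (n - 1) →ₗ[S] Rq S t n :=
  Submodule.liftQ _ ((Submodule.mkQ _).comp (LinearMap.mulLeft S t)) <| by
    rw [Ideal.span_singleton_le_iff_mem]
    change Ideal.Quotient.mk _ (t * t ^ (n - 1)) = 0
    rw [Ideal.Quotient.eq_zero_iff_mem, Ideal.mem_span_singleton, ← pow_succ']
    exact pow_dvd_pow t (by omega)

/-- The ideal `M = ε⁻¹(tR_n)` of `A_n`. -/
abbrev augModTKer (n : ℕ) (hn : 1 ≤ n) : Ideal (Aq S t G n) :=
  RingHom.ker ((Rmap S t 1 n hn).comp (aug S t G n))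

variable {S t G} {n : ℕ}

theorem Rmap_mk (i : ℕ) (h : i ≤ n) (a : S) :
    Rmap S t i n h (Ideal.Quotient.mk _ a) = Ideal.Quotient.mk _ a :=
  Ideal.Quotient.factor_mk _ _

theorem mulT_mk (a : S) : mulT S t n (Ideal.Quotient.mk _ a) = Ideal.Quotient.mk _ (t * a) :=
  rfl

theorem mulT_Rmap (s : Rq S t n) :
    mulT S t n (Rmap S t (n - 1) n (Nat.sub_le n 1) s) = tbar S t n * s := by
  obtain ⟨a, rfl⟩ := Ideal.Quotient.mk_surjective s
  rw [Rmap_mk, mulT_mk, tbar, map_mul]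

theorem mulT_Rmap_mul (r : Rq S t n) (y : Rq S t (n - 1)) :
    mulT S t n (Rmap S t (n - 1) n (Nat.sub_le n 1) r * y) = r * mulT S t n y := by
  obtain ⟨b, rfl⟩ := Ideal.Quotient.mk_surjective r
  obtain ⟨a, rfl⟩ := Ideal.Quotient.mk_surjective y
  rw [Rmap_mk, ← map_mul, mulT_mk, mulT_mk, ← map_mul, mul_left_comm]

theorem mulT_injective [IsDomain S] (ht : t ≠ 0) : Function.Injective (mulT S t n) := by
  rw [← LinearMap.ker_eq_bot, LinearMap.ker_eq_bot']
  intro y hy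
  obtain ⟨a, rfl⟩ := Ideal.Quotient.mk_surjective y
  rw [mulT_mk, Ideal.Quotient.eq_zero_iff_mem, Ideal.mem_span_singleton] at hy
  rw [Ideal.Quotient.eq_zero_iff_mem, Ideal.mem_span_singleton]
  rcases n with _ | n
  · simp
  · rwa [pow_succ', mul_dvd_mul_iff_left ht] at hy

theorem Rmap_one_eq_zero_iff (hn : 1 ≤ n) (r : Rq S t n) :
    Rmap S t 1 n hn r = 0 ↔ ∃ y, mulT S t n y = r := by
  obtain ⟨a, rfl⟩ := Ideal.Quotient.mk_surjective r
  rw [Rmap_mk, Ideal.Quotient.eq_zero_iff_mem, pow_one, Ideal.mem_span_singleton]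
  constructor
  · rintro ⟨c, rfl⟩
    exact ⟨Ideal.Quotient.mk _ c, mulT_mk c⟩
  · rintro ⟨y, hy⟩
    obtain ⟨c, rfl⟩ := Ideal.Quotient.mk_surjective y
    rw [mulT_mk, Ideal.Quotient.eq, Ideal.mem_span_singleton] at hy
    exact (dvd_sub_right (dvd_mul_right t c)).mp ((dvd_pow_self t (by omega)).trans hy)

variable {hn : 1 ≤ n}

theorem exists_mulT_eq_aug (x : augModTKer S t G n hn) : ∃ y, mulT S t n y = aug S t G n x :=
  (Rmap_one_eq_zero_iff hn _).mp x.2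

theorem single_one_mulT_mem (y : Rq S t (n - 1)) :
    MonoidAlgebra.single 1 (mulT S t n y) ∈ augModTKer S t G n hn := by
  change Rmap S t 1 n hn (aug S t G n _) = 0
  rw [Rmap_one_eq_zero_iff]
  exact ⟨y, by simp [aug, MonoidAlgebra.lift_single]⟩

variable (S t G hn) in
def augDivTSection :
    letI : Module (Rq S t n) (Rq S t (n - 1)) :=
      Module.compHom _ (Rmap S t (n - 1) n (Nat.sub_le n 1))
    Rq S t (n - 1) →ₗ[Rq S t n] augModTKer S t G n hn :=
  letI : Module (Rq S t n) (Rq S t (n - 1)) :=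
    Module.compHom _ (Rmap S t (n - 1) n (Nat.sub_le n 1))
  { toFun y := ⟨MonoidAlgebra.single 1 (mulT S t n y), single_one_mulT_mem y⟩
    map_add' y z := Subtype.ext <| by simp [MonoidAlgebra.single_add]
    map_smul' r y := Subtype.ext <| by
      change MonoidAlgebra.single 1 (mulT S t n (Rmap S t (n - 1) n (Nat.sub_le n 1) r * y)) = _
      simp [mulT_Rmap_mul] }

variable [IsDomain S]

variable (S t G hn) in
/-- The map `φ = ε/t : M → R_{n-1}`. -/
def augDivT (ht : t ≠ 0) :
    letI : Module (Aq S t G n) (Rq S t (n - 1)) :=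
      Module.compHom _ ((Rmap S t (n - 1) n (Nat.sub_le n 1)).comp (aug S t G n))
    augModTKer S t G n hn →ₗ[Aq S t G n] Rq S t (n - 1) :=
  letI : Module (Aq S t G n) (Rq S t (n - 1)) :=
    Module.compHom _ ((Rmap S t (n - 1) n (Nat.sub_le n 1)).comp (aug S t G n))
  { toFun x := (exists_mulT_eq_aug x).choose
    map_add' x y := mulT_injective ht <| by
      rw [map_add, (exists_mulT_eq_aug (x + y)).choose_spec, (exists_mulT_eq_aug x).choose_spec,
        (exists_mulT_eq_aug y).choose_spec, Submodule.coe_add, map_add]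
    map_smul' c x := mulT_injective ht <| by
      change _ = mulT S t n (Rmap S t (n - 1) n (Nat.sub_le n 1) (aug S t G n c) * _)
      rw [mulT_Rmap_mul, (exists_mulT_eq_aug (c • x)).choose_spec,
        (exists_mulT_eq_aug x).choose_spec, Submodule.coe_smul, smul_eq_mul, map_mul] }

theorem mulT_augDivT (ht : t ≠ 0) (x : augModTKer S t G n hn) :
    mulT S t n (augDivT S t G hn ht x) = aug S t G n x :=
  (exists_mulT_eq_aug x).choose_spec

theorem augDivT_eq_Rmap (ht : t ≠ 0) {x : augModTKer S t G n hn} {s : Rq S t n}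
    (hs : aug S t G n x = tbar S t n * s) :
    augDivT S t G hn ht x = Rmap S t (n - 1) n (Nat.sub_le n 1) s :=
  mulT_injective ht <| by rw [mulT_augDivT, mulT_Rmap, hs]

theorem augDivT_eq_zero_iff (ht : t ≠ 0) (x : augModTKer S t G n hn) :
    augDivT S t G hn ht x = 0 ↔ aug S t G n x = 0 := by
  rw [← (mulT_injective ht).eq_iff, mulT_augDivT, map_zero]

theorem augDivT_augDivTSection (ht : t ≠ 0) (y : Rq S t (n - 1)) :
    augDivT S t G hn ht (augDivTSection S t G hn y) = y :=
  mulT_injective ht <| by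
    rw [mulT_augDivT]
    simp [augDivTSection, aug, MonoidAlgebra.lift_single]

end

/-- Let `M ⊆ A_n` be the kernel of the composite of the augmentation
`ε : A_n → R_n` with the canonical surjection `R_n → k`.  Then the assignment
`Σ r_g g ↦ (s mod t^{n-1})`, where `Σ r_g = t·s`, is a well-defined surjective `A_n`-linear
map `φ : M → R_{n-1}` (with `R_{n-1}` carrying the trivial `G`-action); its kernel is the
augmentation ideal `ker ε`, and the resulting short exact sequence
`0 → ker ε → M → R_{n-1} → 0` splits after restriction of scalars to `R_n`. -/
theorem statement4 (ht : Irreducible t) (n : ℕ) (hn : 1 ≤ n) :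
    letI : Module (Aq S t G n) (Rq S t (n - 1)) :=
      Module.compHom _ ((Rmap S t (n - 1) n (Nat.sub_le n 1)).comp (aug S t G n))
    letI : Module (Rq S t n) (Rq S t (n - 1)) :=
      Module.compHom _ (Rmap S t (n - 1) n (Nat.sub_le n 1))
    ∃ φ : ↥(RingHom.ker ((Rmap S t 1 n hn).comp (aug S t G n))) →ₗ[Aq S t G n]
        Rq S t (n - 1),
      (∀ (x : ↥(RingHom.ker ((Rmap S t 1 n hn).comp (aug S t G n)))) (s : Rq S t n),
          aug S t G n ↑x = tbar S t n * s → φ x = Rmap S t (n - 1) n (Nat.sub_le n 1) s) ∧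
        Function.Surjective φ ∧
        (∀ x : ↥(RingHom.ker ((Rmap S t 1 n hn).comp (aug S t G n))),
          φ x = 0 ↔ aug S t G n ↑x = 0) ∧
        ∃ r : Rq S t (n - 1) →ₗ[Rq S t n]
            ↥(RingHom.ker ((Rmap S t 1 n hn).comp (aug S t G n))),
          ∀ y, φ (r y) = y :=
  ⟨augDivT S t G hn ht.ne_zero, fun _ _ => augDivT_eq_Rmap ht.ne_zero,
    fun y => ⟨_, augDivT_augDivTSection ht.ne_zero y⟩, augDivT_eq_zero_iff ht.ne_zero,
    augDivTSection S t G hn, augDivT_augDivTSection ht.ne_zero⟩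

end
end
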